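/- There do not exist positive integers n_1 ≡ 0 (mod 4), n_2 ≡ 1 (mod 4), n_3 ≡ 3 (mod 4) with n = n_1 + n_2 + n_3 ≡ 0 (mod 4) such that D(C_n,x) = D(C_{n_1},x)·D(C_{n_2},x)·D(C_{n_3},x). -/

import Mathlib

open Polynomial SimpleGraph

/-- `S` is a dominating set of `G`: every vertex is in `S` or adjacent to a vertex of `S`. -/
def IsDomSet {V : Type*} (G : SimpleGraph V) (S : Finset V) : Prop :=
  ∀ v : V, v ∈ S ∨ ∃ u ∈ S, G.Adj u v

/-- The domination polynomial `D(G,x) = ∑ d(G,i) xⁱ`. -/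
noncomputable def domPoly {V : Type*} [Fintype V] (G : SimpleGraph V) : Polynomial ℤ :=
  ∑ i ∈ Finset.range (Fintype.card V + 1),
    (Nat.card {S : Finset V // IsDomSet G S ∧ S.card = i} : ℤ) • (X : Polynomial ℤ) ^ i

/-!
A dominating set `S` of the cycle `C_k` is encoded by the states `g i ∈ {0, 1, 2}`, the distance
from `i` back to the nearest vertex of `S`. Consecutive states are linked by the transfer matrix `T`
(a vertex of `S` contributes a factor `X`), so `D(C_k) = tr Tᵏ` for `k ≥ 1`, and
`T³ = X (T² + T + 1)` gives the recurrence of `D(C_k)`. Hence `D(C_k)(-1)` is `3` or `-1` according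
as `4 ∣ k` or not, and `D'(C_k)(-1)` is `-k, k, 0, 0` for `k ≡ 0, 1, 2, 3 (mod 4)`. Differentiating
the factorization at `-1` gives `-n = -n₁ - 3 n₂`, that is `n₃ = 2 n₂`, although `n₃` is odd.
-/

open Finset

namespace Matrix

variable {ι R : Type*} [Fintype ι] [DecidableEq ι] [CommSemiring R]

theorem pow_succ_apply_eq_sum (M : Matrix ι ι R) (m : ℕ) (a b : ι) :
    (M ^ (m + 1)) a b = ∑ f : Fin (m + 1) → ι with f 0 = a,
      (∏ i : Fin m, M (f i.castSucc) (f i.succ)) * M (f (Fin.last m)) b := by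
  rw [sum_filter]
  induction m generalizing b with
  | zero =>
    rw [← (Equiv.funUnique (Fin 1) ι).symm.sum_comp]
    simp
  | succ m ih =>
    rw [pow_succ, mul_apply, ← (Fin.snocEquiv _).sum_comp, Fintype.sum_prod_type]
    simp [ih, sum_mul, Fin.prod_univ_castSucc, Fin.succ_castSucc, -Fin.castSucc_succ]

theorem trace_pow_succ_eq_sum (M : Matrix ι ι R) (m : ℕ) :
    (M ^ (m + 1)).trace = ∑ f : Fin (m + 1) → ι, ∏ i, M (f i) (f (i + 1)) := by
  simp only [trace, diag, pow_succ_apply_eq_sum, sum_filter]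
  rw [sum_comm]
  refine sum_congr rfl fun f _ => ?_
  rw [Fin.prod_univ_castSucc]
  simp

end Matrix

noncomputable def cycleTransferMatrix : Matrix (Fin 3) (Fin 3) ℤ[X] :=
  !![X, 1, 0; X, 0, 1; X, 0, 0]

lemma cycleTransferMatrix_apply (s t : Fin 3) :
    cycleTransferMatrix s t = if t = 0 then X else if t = s + 1 then 1 else 0 := by
  fin_cases s <;> fin_cases t <;> rfl

lemma cycleTransferMatrix_pow_three :
    cycleTransferMatrix ^ 3 =
      (X : ℤ[X]) • (cycleTransferMatrix ^ 2 + cycleTransferMatrix + 1) := by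
  refine Matrix.ext fun s t => ?_
  fin_cases s <;> fin_cases t <;>
    simp [cycleTransferMatrix, pow_succ, Matrix.mul_apply, Fin.sum_univ_three] <;> ring

noncomputable def cycleDomPoly (k : ℕ) : ℤ[X] := (cycleTransferMatrix ^ k).trace

lemma cycleDomPoly_add_three (k : ℕ) :
    cycleDomPoly (k + 3) =
      X * (cycleDomPoly (k + 2) + cycleDomPoly (k + 1) + cycleDomPoly k) := by
  have h : cycleTransferMatrix ^ (k + 3) = (X : ℤ[X]) • (cycleTransferMatrix ^ (k + 2) +
      cycleTransferMatrix ^ (k + 1) + cycleTransferMatrix ^ k) := by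
    rw [pow_add, cycleTransferMatrix_pow_three, Matrix.mul_smul, mul_add, mul_add, mul_one,
      ← pow_add, ← pow_succ]
  simp only [cycleDomPoly, h, Matrix.trace_smul, Matrix.trace_add, smul_eq_mul]

lemma cycleDomPoly_zero : cycleDomPoly 0 = 3 := by
  simp [cycleDomPoly]

lemma cycleDomPoly_one : cycleDomPoly 1 = X := by
  simp [cycleDomPoly, Matrix.trace_fin_three, cycleTransferMatrix]

lemma cycleDomPoly_two : cycleDomPoly 2 = X ^ 2 + 2 * X := by
  simp [cycleDomPoly, Matrix.trace_fin_three, cycleTransferMatrix, sq]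
  ring

lemma cycleDomPoly_three : cycleDomPoly 3 = X ^ 3 + 3 * X ^ 2 + 3 * X := by
  rw [cycleDomPoly_add_three 0, cycleDomPoly_two, cycleDomPoly_one, cycleDomPoly_zero]
  ring

lemma eval_neg_one_cycleDomPoly_add_four (k : ℕ) :
    (cycleDomPoly (k + 4)).eval (-1) = (cycleDomPoly k).eval (-1) := by
  rw [cycleDomPoly_add_three (k + 1), cycleDomPoly_add_three k]
  simp only [eval_mul, eval_add, eval_X]
  ring

lemma derivative_eval_neg_one_cycleDomPoly_add_four (k : ℕ) :
    (derivative (cycleDomPoly (k + 4))).eval (-1) = (derivative (cycleDomPoly k)).eval (-1) +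
      (cycleDomPoly (k + 3)).eval (-1) - (cycleDomPoly k).eval (-1) := by
  rw [cycleDomPoly_add_three (k + 1), cycleDomPoly_add_three k]
  simp only [derivative_mul, derivative_add, derivative_X, eval_mul, eval_add, eval_X, eval_one]
  ring

theorem eval_neg_one_cycleDomPoly :
    ∀ k, (cycleDomPoly k).eval (-1) = if k % 4 = 0 then 3 else -1
  | 0 => by simp [cycleDomPoly_zero]
  | 1 => by simp [cycleDomPoly_one]
  | 2 => by norm_num [cycleDomPoly_two]
  | 3 => by norm_num [cycleDomPoly_three]
  | k + 4 => by rw [eval_neg_one_cycleDomPoly_add_four, eval_neg_one_cycleDomPoly k]; simp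

theorem derivative_eval_neg_one_cycleDomPoly : ∀ k, (derivative (cycleDomPoly k)).eval (-1) =
    if k % 4 = 0 then -(k : ℤ) else if k % 4 = 1 then (k : ℤ) else 0
  | 0 => by simp [cycleDomPoly_zero]
  | 1 => by simp [cycleDomPoly_one]
  | 2 => by norm_num [cycleDomPoly_two]
  | 3 => by norm_num [cycleDomPoly_three]
  | k + 4 => by
    rw [derivative_eval_neg_one_cycleDomPoly_add_four, derivative_eval_neg_one_cycleDomPoly k,
      eval_neg_one_cycleDomPoly, eval_neg_one_cycleDomPoly]
    split_ifs <;> push_cast <;> omega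

lemma domPoly_eq_sum {V : Type*} [Fintype V] (G : SimpleGraph V) [DecidablePred (IsDomSet G)] :
    domPoly G = ∑ S with IsDomSet G S, X ^ #S := by
  rw [domPoly, ← sum_fiberwise_of_maps_to (g := card) (t := range (Fintype.card V + 1))
    fun S _ => mem_range_succ_iff.2 (card_le_univ S)]
  refine sum_congr rfl fun i _ => ?_
  rw [sum_congr rfl fun S hS => by rw [(mem_filter.1 hS).2], sum_const, filter_filter,
    Nat.card_eq_fintype_card, Fintype.card_subtype, natCast_zsmul]

lemma isDomSet_cycleGraph_iff {m : ℕ} (S : Finset (Fin (m + 1))) :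
    IsDomSet (cycleGraph (m + 1)) S ↔ ∀ v, v - 1 ∈ S ∨ v ∈ S ∨ v + 1 ∈ S := by
  cases m with
  | zero => simp [IsDomSet, Fin.fin_one_eq_zero]
  | succ m =>
    refine forall_congr' fun v => ?_
    simp only [adj_comm, ← mem_neighborSet, cycleGraph_neighborSet]
    simp only [Set.mem_insert_iff, Set.mem_singleton_iff, and_or_left, exists_or, exists_eq_right]
    tauto

section CycleStates

variable {m : ℕ}

def IsGapCycle (g : Fin (m + 1) → Fin 3) : Prop :=
  ∀ i, g (i + 1) = 0 ∨ g (i + 1) = g i + 1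

def gapState (S : Finset (Fin (m + 1))) (i : Fin (m + 1)) : Fin 3 :=
  if i ∈ S then 0 else if i - 1 ∈ S then 1 else 2

lemma prod_cycleTransferMatrix_eq_zero {g : Fin (m + 1) → Fin 3}
    (hg : ¬ IsGapCycle g) : ∏ i, cycleTransferMatrix (g i) (g (i + 1)) = 0 := by
  obtain ⟨i, hi⟩ := not_forall.1 hg
  refine prod_eq_zero (mem_univ i) ?_
  simp_all [cycleTransferMatrix_apply]

lemma prod_cycleTransferMatrix_of_isGapCycle {g : Fin (m + 1) → Fin 3} (hg : IsGapCycle g) :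
    ∏ i, cycleTransferMatrix (g i) (g (i + 1)) = X ^ #{i | g i = 0} := calc
  _ = ∏ i, if g (i + 1) = 0 then X else 1 := prod_congr rfl fun i _ => by
    rcases hg i with h | h <;> simp [cycleTransferMatrix_apply, h]
  _ = ∏ i, if g i = 0 then X else 1 :=
    Equiv.prod_comp (Equiv.addRight 1) fun i => if g i = 0 then X else 1
  _ = X ^ #{i | g i = 0} := by rw [prod_ite, prod_const, prod_const_one, mul_one]

lemma isGapCycle_gapState {S : Finset (Fin (m + 1))} (hS : ∀ v, v - 1 ∈ S ∨ v ∈ S ∨ v + 1 ∈ S) :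
    IsGapCycle (gapState S) := by
  intro i
  have := hS i
  simp only [gapState, add_sub_cancel_right]
  split_ifs <;> simp_all

lemma filter_gapState_eq_zero (S : Finset (Fin (m + 1))) :
    ({i | gapState S i = 0} : Finset _) = S := by
  ext i
  rw [mem_filter_univ, gapState]
  split_ifs <;> simp_all

lemma gapState_filter_eq_zero {g : Fin (m + 1) → Fin 3} (hg : IsGapCycle g) :
    gapState {i | g i = 0} = g := by
  funext i
  have h := hg (i - 1)
  rw [sub_add_cancel] at h
  simp only [gapState, mem_filter_univ]
  generalize g i = b, g (i - 1) = a at *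
  revert a b
  decide

lemma IsGapCycle.eq_zero_near {g : Fin (m + 1) → Fin 3} (hg : IsGapCycle g) (v : Fin (m + 1)) :
    g (v - 1) = 0 ∨ g v = 0 ∨ g (v + 1) = 0 := by
  have h₁ := hg (v - 1)
  have h₂ := hg v
  rw [sub_add_cancel] at h₁
  generalize g (v - 1) = a, g v = b, g (v + 1) = c at *
  revert a b c
  decide

end CycleStates

theorem domPoly_cycleGraph {k : ℕ} (hk : 0 < k) : domPoly (cycleGraph k) = cycleDomPoly k := by
  classical
  obtain ⟨m, rfl⟩ := Nat.exists_eq_add_one_of_ne_zero hk.ne'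
  rw [domPoly_eq_sum, cycleDomPoly, Matrix.trace_pow_succ_eq_sum,
    ← sum_filter_of_ne fun g _ => not_imp_comm.1 prod_cycleTransferMatrix_eq_zero]
  simp_rw [isDomSet_cycleGraph_iff]
  refine sum_nbij' gapState (fun g => ({i | g i = 0} : Finset _)) (fun S hS => ?_)
    (fun g hg => ?_) (fun S _ => filter_gapState_eq_zero S)
    (fun g hg => gapState_filter_eq_zero ((mem_filter_univ _).1 hg)) (fun S hS => ?_)
  · exact (mem_filter_univ _).2 (isGapCycle_gapState ((mem_filter_univ _).1 hS))
  · exact (mem_filter_univ _).2 fun v => by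
      simpa only [mem_filter_univ] using ((mem_filter_univ _).1 hg).eq_zero_near v
  · rw [prod_cycleTransferMatrix_of_isGapCycle (isGapCycle_gapState ((mem_filter_univ _).1 hS)),
      filter_gapState_eq_zero]

theorem no_three_cycle_factorization_case_one (n n₁ n₂ n₃ : ℕ)
    (h₁ : 0 < n₁) (h₂ : 0 < n₂) (h₃ : 0 < n₃) (hsum : n = n₁ + n₂ + n₃)
    (hn : n % 4 = 0) (hn₁ : n₁ % 4 = 0) (hn₂ : n₂ % 4 = 1) (hn₃ : n₃ % 4 = 3) :
    domPoly (cycleGraph n) ≠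
      domPoly (cycleGraph n₁) * domPoly (cycleGraph n₂) * domPoly (cycleGraph n₃) := by
  intro h
  rw [domPoly_cycleGraph (by omega : 0 < n), domPoly_cycleGraph h₁, domPoly_cycleGraph h₂,
    domPoly_cycleGraph h₃] at h
  have hslope := congrArg (fun p => (derivative p).eval (-1)) h
  simp only [derivative_mul, eval_add, eval_mul, eval_neg_one_cycleDomPoly,
    derivative_eval_neg_one_cycleDomPoly, hn, hn₁, hn₂, hn₃] at hslope
  norm_num at hslope
  omega
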